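/- arXiv:1306.1727 — 5 statements merged into one kernel-verified Lean document; each statement's English description precedes it below -/
import Mathlib

section
/- Let ω₁, ω₂ be analytic in the unit disk E with |ω₁(z)| < 1 and |ω₂(z)| < 1 for all z ∈ E, and let t ∈ [0,1]. Then the function ω = (t·ω₁ + (1-t)·ω₂ + ω₁·ω₂)/(1 + t·ω₂ + (1-t)·ω₁) satisfies |ω(z)| < 1 for all z ∈ E. -/
/-! The identity
`|1 + t w₂ + (1-t) w₁|² - |t w₁ + (1-t) w₂ + w₁ w₂|² = t (1-|w₁|²) |1+w₂|² + (1-t) (1-|w₂|²) |1+w₁|²`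
exhibits the gap between denominator and numerator as a convex combination of two quantities
that are positive when `|w₁|, |w₂| < 1`. -/

open Complex

lemma normSq_sub_normSq_eq_convex_comb (t : ℝ) (w₁ w₂ : ℂ) :
    normSq (1 + t * w₂ + (1 - t) * w₁) - normSq (t * w₁ + (1 - t) * w₂ + w₁ * w₂)
      = t * ((1 - normSq w₁) * normSq (1 + w₂)) + (1 - t) * ((1 - normSq w₂) * normSq (1 + w₁)) := by
  simp only [normSq_apply, add_re, add_im, mul_re, mul_im, sub_re, sub_im, one_re, one_im,
    ofReal_re, ofReal_im]
  ring

lemma convex_comb_pos {t a b : ℝ} (ht : t ∈ Set.Icc (0 : ℝ) 1) (ha : 0 < a) (hb : 0 < b) :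
    0 < t * a + (1 - t) * b := by
  obtain ⟨ht₀, ht₁⟩ := ht
  nlinarith [mul_nonneg ht₀ ha.le, mul_nonneg (sub_nonneg.2 ht₁) hb.le]

lemma one_sub_normSq_mul_normSq_one_add_pos {w v : ℂ} (hw : ‖w‖ < 1) (hv : ‖v‖ < 1) :
    0 < (1 - normSq w) * normSq (1 + v) := by
  have hw' : normSq w < 1 := by
    rw [← Complex.sq_norm]; exact pow_lt_one₀ (norm_nonneg w) hw two_ne_zero
  have hv' : 1 + v ≠ 0 := by
    intro h
    rw [add_eq_zero_iff_eq_neg'.mp h, norm_neg, norm_one] at hv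
    exact lt_irrefl _ hv
  exact mul_pos (sub_pos.2 hw') (normSq_pos.2 hv')

lemma norm_numer_lt_norm_denom {w₁ w₂ : ℂ} (hw₁ : ‖w₁‖ < 1) (hw₂ : ‖w₂‖ < 1) {t : ℝ}
    (ht : t ∈ Set.Icc (0 : ℝ) 1) :
    ‖t * w₁ + (1 - t) * w₂ + w₁ * w₂‖ < ‖1 + t * w₂ + (1 - t) * w₁‖ := by
  have hgap := convex_comb_pos ht (one_sub_normSq_mul_normSq_one_add_pos hw₁ hw₂)
    (one_sub_normSq_mul_normSq_one_add_pos hw₂ hw₁)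
  rw [← normSq_sub_normSq_eq_convex_comb, sub_pos, ← Complex.sq_norm, ← Complex.sq_norm] at hgap
  exact lt_of_pow_lt_pow_left₀ 2 (norm_nonneg _) hgap

theorem stmt_2_general (ω₁ ω₂ : ℂ → ℂ)
    (hb₁ : ∀ z ∈ Metric.ball (0 : ℂ) 1, ‖ω₁ z‖ < 1)
    (hb₂ : ∀ z ∈ Metric.ball (0 : ℂ) 1, ‖ω₂ z‖ < 1)
    (t : ℝ) (ht : t ∈ Set.Icc (0 : ℝ) 1) :
    ∀ z ∈ Metric.ball (0 : ℂ) 1,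
      ‖(t * ω₁ z + (1 - t) * ω₂ z + ω₁ z * ω₂ z)
        / (1 + t * ω₂ z + (1 - t) * ω₁ z)‖ < 1 := by
  intro z hz
  have hlt := norm_numer_lt_norm_denom (hb₁ z hz) (hb₂ z hz) ht
  rw [norm_div, div_lt_one ((norm_nonneg _).trans_lt hlt)]
  exact hlt

theorem stmt_2 (ω₁ ω₂ : ℂ → ℂ)
    (h₁ : AnalyticOn ℂ ω₁ (Metric.ball (0 : ℂ) 1))
    (h₂ : AnalyticOn ℂ ω₂ (Metric.ball (0 : ℂ) 1))
    (hb₁ : ∀ z ∈ Metric.ball (0 : ℂ) 1, ‖ω₁ z‖ < 1)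
    (hb₂ : ∀ z ∈ Metric.ball (0 : ℂ) 1, ‖ω₂ z‖ < 1)
    (t : ℝ) (ht : t ∈ Set.Icc (0 : ℝ) 1) :
    ∀ z ∈ Metric.ball (0 : ℂ) 1,
      ‖(t * ω₁ z + (1 - t) * ω₂ z + ω₁ z * ω₂ z)
        / (1 + t * ω₂ z + (1 - t) * ω₁ z)‖ < 1 :=
  stmt_2_general ω₁ ω₂ hb₁ hb₂ t ht
end

section
/- Let α₁, α₂ ∈ [-1,1] with α₁ ≥ α₂. Then every root of the quadratic polynomial q(z) = z² - (α₁+α₂)z - (α₁-α₂-1) lies in the closed unit disk |z| ≤ 1. -/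
/-! This is the Schur–Cohn criterion for a real monic quadratic `z ^ 2 + b z + c`: if `c ≤ 1` and
`|b| ≤ 1 + c`, then every root lies in the closed unit disk. A non-real root `z` has `conj z` as
the other root, so `‖z‖ ^ 2 = c ≤ 1`. A real root `x > 1` would give
`0 = x ^ 2 + b x + c ≥ (x - 1) (x - c)`, forcing `x ≤ c ≤ 1`; symmetrically for `x < -1`.
Here `b = -(α₁ + α₂)` and `c = 1 - α₁ + α₂`. -/

theorem abs_le_one_of_sq_add_mul_add_eq_zero {b c x : ℝ} (hc : c ≤ 1) (hb : |b| ≤ 1 + c)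
    (hx : x ^ 2 + b * x + c = 0) : |x| ≤ 1 := by
  obtain ⟨hb₁, hb₂⟩ := abs_le.mp hb
  refine abs_le.mpr ⟨?_, ?_⟩
  · by_contra! hlt
    nlinarith [mul_pos (show 0 < -(x + 1) by linarith) (show 0 < -(x + c) by linarith)]
  · by_contra! hgt
    nlinarith [mul_pos (show 0 < x - 1 by linarith) (show 0 < x - c by linarith)]

theorem Complex.norm_le_one_of_sq_add_mul_add_eq_zero {b c : ℝ} {z : ℂ} (hc : c ≤ 1)
    (hb : |b| ≤ 1 + c) (hz : z ^ 2 + b * z + c = 0) : ‖z‖ ≤ 1 := by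
  have hre : z.re ^ 2 - z.im ^ 2 + b * z.re + c = 0 := by
    simpa [sq] using congrArg Complex.re hz
  have him : z.im * (2 * z.re + b) = 0 := by
    have := congrArg Complex.im hz
    simp only [sq, add_im, mul_im, ofReal_re, ofReal_im, zero_im] at this
    linarith
  rcases mul_eq_zero.mp him with hreal | hvertex
  · rw [← re_add_im z, hreal, ofReal_zero, zero_mul, add_zero, norm_real, Real.norm_eq_abs]
    exact abs_le_one_of_sq_add_mul_add_eq_zero hc hb (by simpa [hreal] using hre)
  · have hnormSq : normSq z = c := by
      rw [normSq_apply]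
      linear_combination -hre + z.re * hvertex
    rw [← sq_le_one_iff₀ (norm_nonneg z), ← normSq_eq_norm_sq, hnormSq]
    exact hc

theorem stmt_6 (α₁ α₂ : ℝ) (hα₁ : α₁ ∈ Set.Icc (-1 : ℝ) 1) (hα₂ : α₂ ∈ Set.Icc (-1 : ℝ) 1)
    (hle : α₂ ≤ α₁) (z : ℂ)
    (hz : z ^ 2 - ((α₁ + α₂ : ℝ) : ℂ) * z - ((α₁ - α₂ - 1 : ℝ) : ℂ) = 0) :
    ‖z‖ ≤ 1 := by
  obtain ⟨hα₁_lower, hα₁_upper⟩ := hα₁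
  obtain ⟨hα₂_lower, hα₂_upper⟩ := hα₂
  refine Complex.norm_le_one_of_sq_add_mul_add_eq_zero (b := -(α₁ + α₂)) (c := 1 - α₁ + α₂)
    (by linarith) (abs_le.mpr ⟨by linarith, by linarith⟩) ?_
  push_cast at hz ⊢
  linear_combination hz
end

section
/- Let α₁, α₂ ∈ [-1,1] with α₁ ≥ α₂ and t ∈ [0,1]. Then every root of the cubic γ(z) = z³ + (2t-1-2α₁t-2α₂(1-t))z² + (1+2α₂(1-t)-2α₁t)z + (2t-1) lies in the closed unit disk |z| ≤ 1. -/
/-!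
The Cayley transform `w = (z + 1) / (z - 1)` maps the exterior of the closed unit disk onto the
open right half-plane, and turns `2 γ(z)` into `(z - 1)³ (a w³ + b w² + c w + d)` with
`a = t(1 - α₁)`, `b = (1 - t)(1 - α₂)`, `c = t(1 + α₁)`, `d = (1 - t)(1 + α₂)`. These coefficients
are nonnegative, sum to `2`, and satisfy the Hurwitz condition `a d ≤ b c` (as `α₂ ≤ α₁`), so this
cubic has no root with positive real part.
-/

open Complex

theorem re_nonpos_of_cubic_eq_zero {a b c d : ℝ} (ha : 0 ≤ a) (hb : 0 ≤ b) (hc : 0 ≤ c)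
    (hd : 0 ≤ d) (hbc : a * d ≤ b * c) (hsum : 0 < a + b + c + d) {w : ℂ}
    (hw : (a : ℂ) * w ^ 3 + b * w ^ 2 + c * w + d = 0) : w.re ≤ 0 := by
  by_contra! hx
  set x := w.re
  set y := w.im
  have hre : a * (x ^ 3 - 3 * x * y ^ 2) + b * (x ^ 2 - y ^ 2) + c * x + d = 0 := by
    have := congrArg re hw
    simp only [pow_succ, pow_zero, one_mul, add_re, mul_re, mul_im, ofReal_re, ofReal_im,
      zero_re] at this
    linear_combination this
  have him : y * (a * (3 * x ^ 2 - y ^ 2) + 2 * b * x + c) = 0 := by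
    have := congrArg im hw
    simp only [pow_succ, pow_zero, one_mul, add_im, mul_re, mul_im, ofReal_re, ofReal_im,
      zero_im] at this
    linear_combination this
  suffices a = 0 ∧ b = 0 ∧ c = 0 ∧ d = 0 by linarith
  rcases mul_eq_zero.mp him with hy | hS
  · rw [hy] at hre
    have h3 : 0 ≤ a * x ^ 3 := by positivity
    have h2 : 0 ≤ b * x ^ 2 := by positivity
    have h1 : 0 ≤ c * x := by positivity
    refine ⟨?_, ?_, ?_, ?_⟩
    · simpa [hx.ne'] using (show a * x ^ 3 = 0 by linarith)
    · simpa [hx.ne'] using (show b * x ^ 2 = 0 by linarith)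
    · simpa [hx.ne'] using (show c * x = 0 by linarith)
    · linarith
  · -- eliminating `y²` between the two parts leaves a sum of nonnegative terms
    have key : 8 * (a ^ 2 * x ^ 3) + 8 * a * b * x ^ 2 + 2 * a * c * x + 2 * (b ^ 2 * x)
        + (b * c - a * d) = 0 := by
      linear_combination (3 * a * x + b) * hS - a * hre
    have habx : 0 ≤ a * b * x ^ 2 := by positivity
    have hacx : 0 ≤ a * c * x := by positivity
    have ha0 : a = 0 := by
      simpa [hx.ne'] using (show a ^ 2 * x ^ 3 = 0 by nlinarith [pow_pos hx 3, sq_nonneg b])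
    have hb0 : b = 0 := by
      simpa [hx.ne'] using (show b ^ 2 * x = 0 by nlinarith [pow_pos hx 3, sq_nonneg a])
    subst ha0 hb0
    have hc0 : c = 0 := by linarith
    subst hc0
    exact ⟨rfl, rfl, rfl, by linarith⟩

theorem re_cayley_pos_of_one_lt_norm {z : ℂ} (hz : 1 < ‖z‖) : 0 < ((z + 1) / (z - 1)).re := by
  have hne : z - 1 ≠ 0 := sub_ne_zero.mpr (by rintro rfl; simp at hz)
  have hnormSq : 1 < normSq z := by rw [normSq_eq_norm_sq]; nlinarith
  rw [div_re, ← add_div]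
  refine div_pos ?_ (normSq_pos.mpr hne)
  simp only [normSq_apply, add_re, sub_re, add_im, sub_im, one_re, one_im] at hnormSq ⊢
  nlinarith

theorem stmt_9 (α₁ α₂ : ℝ) (hα₁ : α₁ ∈ Set.Icc (-1 : ℝ) 1) (hα₂ : α₂ ∈ Set.Icc (-1 : ℝ) 1)
    (hle : α₂ ≤ α₁) (t : ℝ) (ht : t ∈ Set.Icc (0 : ℝ) 1) (z : ℂ)
    (hz : z ^ 3 + ((2*t - 1 - 2*α₁*t - 2*α₂*(1 - t) : ℝ) : ℂ) * z ^ 2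
        + ((1 + 2*α₂*(1 - t) - 2*α₁*t : ℝ) : ℂ) * z + ((2*t - 1 : ℝ) : ℂ) = 0) :
    ‖z‖ ≤ 1 := by
  obtain ⟨ht0, ht1⟩ := ht
  obtain ⟨hα₁l, hα₁u⟩ := hα₁
  obtain ⟨hα₂l, hα₂u⟩ := hα₂
  by_contra! hz1
  have hne : z - 1 ≠ 0 := sub_ne_zero.mpr (by rintro rfl; simp at hz1)
  have hw : ((t * (1 - α₁) : ℝ) : ℂ) * ((z + 1) / (z - 1)) ^ 3
      + (((1 - t) * (1 - α₂) : ℝ) : ℂ) * ((z + 1) / (z - 1)) ^ 2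
      + ((t * (1 + α₁) : ℝ) : ℂ) * ((z + 1) / (z - 1)) + (((1 - t) * (1 + α₂) : ℝ) : ℂ) = 0 := by
    push_cast at hz ⊢
    field_simp
    linear_combination 2 * hz
  have hbc : t * (1 - α₁) * ((1 - t) * (1 + α₂)) ≤ (1 - t) * (1 - α₂) * (t * (1 + α₁)) := by
    nlinarith [mul_nonneg (mul_nonneg ht0 (sub_nonneg.mpr ht1)) (sub_nonneg.mpr hle)]
  have hre := re_nonpos_of_cubic_eq_zero (by nlinarith) (by nlinarith) (by nlinarith)
    (by nlinarith) hbc (by nlinarith) hw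
  exact (re_cayley_pos_of_one_lt_norm hz1).not_ge hre
end

section
/- Let α₁, α₂ ∈ [-1,1] with α₁ ≥ α₂, t ∈ [0,1], and define for z in the open unit disk E the rational function ω(z) = -z·[z³+(2t-1-2α₁t-2α₂(1-t))z²+(1+2α₂(1-t)-2α₁t)z+(2t-1)] / [(2t-1)z³+(1+2α₂(1-t)-2α₁t)z²+(2t-1-2α₁t-2α₂(1-t))z+1]. Then |ω(z)| < 1 for all z ∈ E (where the denominator is nonzero). -/
/-!
With `P = (z + 1)(z² - 2α₁z + 1)` and `Q = (z - 1)(z² - 2α₂z + 1)` the numerator cubic is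
`tP + (1 - t)Q` and the denominator is its reciprocal `tP - (1 - t)Q`, since `P` is
self-reciprocal and `Q` anti-self-reciprocal. In the closed disk
`Re(P Q̄) = -(1 - |z|²)(Re(q₁ q̄₂) + 4(α₁ - α₂)(Im z)²) ≤ 0`, where `q₁, q₂` are the quadratic
factors, so `|tP + (1 - t)Q| ≤ |tP - (1 - t)Q|`. For `|α| ≤ 1` the roots of `z² - 2αz + 1` lie
on the unit circle, so `P` and `Q` do not vanish in the open disk, the denominator does not
vanish either, and the factor `|z| < 1` makes the inequality strict.
-/

open ComplexConjugate

namespace Complex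

lemma normSq_add_le_of_re_mul_conj_nonpos {u v : ℂ} (h : (u * conj v).re ≤ 0) :
    normSq (u + v) ≤ normSq u + normSq v := by
  rw [normSq_add]; linarith

lemma normSq_add_normSq_le_normSq_sub_of_re_mul_conj_nonpos {u v : ℂ}
    (h : (u * conj v).re ≤ 0) :
    normSq u + normSq v ≤ normSq (u - v) := by
  rw [normSq_sub]; linarith

lemma norm_add_le_norm_sub_of_re_mul_conj_nonpos {u v : ℂ} (h : (u * conj v).re ≤ 0) :
    ‖u + v‖ ≤ ‖u - v‖ := by
  rw [← sq_le_sq₀ (norm_nonneg _) (norm_nonneg _), Complex.sq_norm, Complex.sq_norm]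
  exact (normSq_add_le_of_re_mul_conj_nonpos h).trans
    (normSq_add_normSq_le_normSq_sub_of_re_mul_conj_nonpos h)

lemma sub_ne_zero_of_re_mul_conj_nonpos {u v : ℂ} (h : (u * conj v).re ≤ 0)
    (huv : u ≠ 0 ∨ v ≠ 0) : u - v ≠ 0 := by
  rw [← normSq_pos]
  have := normSq_add_normSq_le_normSq_sub_of_re_mul_conj_nonpos h
  rcases huv with hu | hv
  · linarith [normSq_pos.2 hu, normSq_nonneg v]
  · linarith [normSq_pos.2 hv, normSq_nonneg u]

lemma sq_sub_two_mul_add_one_ne_zero {z : ℂ} (hz : ‖z‖ < 1) {α : ℝ}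
    (hα : α ∈ Set.Icc (-1 : ℝ) 1) :
    z ^ 2 - 2 * α * z + 1 ≠ 0 := by
  intro h
  have hre := congrArg re h
  have him := congrArg im h
  simp only [pow_two, add_re, sub_re, mul_re, mul_im, add_im, sub_im, one_re, one_im,
    ofReal_re, ofReal_im, re_ofNat, im_ofNat, zero_re, zero_im] at hre him
  have hr : z.re * z.re + z.im * z.im < 1 := by
    rw [← normSq_apply, ← Complex.sq_norm]
    nlinarith [norm_nonneg z]
  obtain ⟨hα₁, hα₂⟩ := hα
  have hfac : z.im * (z.re - α) = 0 := by linarith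
  rcases mul_eq_zero.1 hfac with hy | hx
  · rw [hy] at hre hr
    nlinarith [sq_nonneg (z.re - α)]
  · rw [sub_eq_zero.1 hx] at hre hr
    nlinarith

lemma re_mul_conj_eq_neg_one_sub_normSq_mul (z : ℂ) (a₁ a₂ : ℝ) :
    ((z + 1) * (z ^ 2 - 2 * a₁ * z + 1) * conj ((z - 1) * (z ^ 2 - 2 * a₂ * z + 1))).re
      = -(1 - normSq z) * (((z ^ 2 - 2 * a₁ * z + 1) * conj (z ^ 2 - 2 * a₂ * z + 1)).re
          + 4 * (a₁ - a₂) * z.im ^ 2) := by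
  simp only [pow_two, normSq_apply, add_re, sub_re, mul_re, mul_im, add_im, sub_im, one_re,
    one_im, ofReal_re, ofReal_im, re_ofNat, im_ofNat, conj_re, conj_im, map_add, map_sub,
    map_mul, map_one, conj_ofReal, map_ofNat]
  ring

lemma re_quadratic_mul_conj_quadratic_add_nonneg (z : ℂ) {a₁ a₂ : ℝ} (ha₁ : a₁ ≤ 1)
    (ha₂ : -1 ≤ a₂) (h : a₂ ≤ a₁) :
    0 ≤ ((z ^ 2 - 2 * a₁ * z + 1) * conj (z ^ 2 - 2 * a₂ * z + 1)).re
      + 4 * (a₁ - a₂) * z.im ^ 2 := by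
  have hd : 0 ≤ a₁ - a₂ := sub_nonneg.2 h
  rcases le_total 0 z.re with hx | hx
  · have key : ((z ^ 2 - 2 * a₁ * z + 1) * conj (z ^ 2 - 2 * a₂ * z + 1)).re
        + 4 * (a₁ - a₂) * z.im ^ 2 = normSq (z ^ 2 - 2 * a₁ * z + 1)
          + 2 * (a₁ - a₂) * (z.re * normSq (1 - z) + 2 * normSq z * (1 - a₁)) := by
      simp only [pow_two, normSq_apply, add_re, sub_re, mul_re, mul_im, add_im, sub_im,
        one_re, one_im, ofReal_re, ofReal_im, re_ofNat, im_ofNat, conj_re, conj_im, map_add,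
        map_sub, map_mul, map_one, conj_ofReal, map_ofNat]
      ring
    rw [key]
    exact add_nonneg (normSq_nonneg _) (mul_nonneg (mul_nonneg zero_le_two hd)
      (add_nonneg (mul_nonneg hx (normSq_nonneg _))
        (mul_nonneg (mul_nonneg zero_le_two (normSq_nonneg z)) (sub_nonneg.2 ha₁))))
  · have key : ((z ^ 2 - 2 * a₁ * z + 1) * conj (z ^ 2 - 2 * a₂ * z + 1)).re
        + 4 * (a₁ - a₂) * z.im ^ 2 = normSq (z ^ 2 - 2 * a₂ * z + 1)
          + 2 * (a₁ - a₂) * (-z.re * normSq (1 + z) + 2 * normSq z * (1 + a₂)) := by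
      simp only [pow_two, normSq_apply, add_re, sub_re, mul_re, mul_im, add_im, sub_im,
        one_re, one_im, ofReal_re, ofReal_im, re_ofNat, im_ofNat, conj_re, conj_im, map_add,
        map_sub, map_mul, map_one, conj_ofReal, map_ofNat]
      ring
    rw [key]
    exact add_nonneg (normSq_nonneg _) (mul_nonneg (mul_nonneg zero_le_two hd)
      (add_nonneg (mul_nonneg (neg_nonneg.2 hx) (normSq_nonneg _))
        (mul_nonneg (mul_nonneg zero_le_two (normSq_nonneg z)) (neg_le_iff_add_nonneg'.1 ha₂))))

lemma re_mul_conj_nonpos_of_norm_le_one {z : ℂ} (hz : ‖z‖ ≤ 1) {a₁ a₂ : ℝ} (ha₁ : a₁ ≤ 1)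
    (ha₂ : -1 ≤ a₂) (h : a₂ ≤ a₁) :
    ((z + 1) * (z ^ 2 - 2 * a₁ * z + 1) * conj ((z - 1) * (z ^ 2 - 2 * a₂ * z + 1))).re
      ≤ 0 := by
  have hz' : 0 ≤ 1 - normSq z := by
    rw [← Complex.sq_norm, sub_nonneg]
    exact pow_le_one₀ (norm_nonneg z) hz
  rw [re_mul_conj_eq_neg_one_sub_normSq_mul, neg_mul, neg_nonpos]
  exact mul_nonneg hz' (re_quadratic_mul_conj_quadratic_add_nonneg z ha₁ ha₂ h)

end Complex

open Complex

theorem stmt_11 (α₁ α₂ : ℝ) (hα₁ : α₁ ∈ Set.Icc (-1 : ℝ) 1) (hα₂ : α₂ ∈ Set.Icc (-1 : ℝ) 1)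
    (hle : α₂ ≤ α₁) (t : ℝ) (ht : t ∈ Set.Icc (0 : ℝ) 1) (z : ℂ)
    (hz : ‖z‖ < 1) :
    ‖z * (z ^ 3 + ((2*t - 1 - 2*α₁*t - 2*α₂*(1 - t) : ℝ) : ℂ) * z ^ 2
        + ((1 + 2*α₂*(1 - t) - 2*α₁*t : ℝ) : ℂ) * z + ((2*t - 1 : ℝ) : ℂ))‖
      < ‖((2*t - 1 : ℝ) : ℂ) * z ^ 3
        + ((1 + 2*α₂*(1 - t) - 2*α₁*t : ℝ) : ℂ) * z ^ 2
        + ((2*t - 1 - 2*α₁*t - 2*α₂*(1 - t) : ℝ) : ℂ) * z + 1‖ := by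
  set P := (z + 1) * (z ^ 2 - 2 * α₁ * z + 1)
  set Q := (z - 1) * (z ^ 2 - 2 * α₂ * z + 1)
  have hN : z ^ 3 + ((2*t - 1 - 2*α₁*t - 2*α₂*(1 - t) : ℝ) : ℂ) * z ^ 2
      + ((1 + 2*α₂*(1 - t) - 2*α₁*t : ℝ) : ℂ) * z + ((2*t - 1 : ℝ) : ℂ)
      = t * P + ((1 - t : ℝ) : ℂ) * Q := by push_cast; ring
  have hD : ((2*t - 1 : ℝ) : ℂ) * z ^ 3 + ((1 + 2*α₂*(1 - t) - 2*α₁*t : ℝ) : ℂ) * z ^ 2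
      + ((2*t - 1 - 2*α₁*t - 2*α₂*(1 - t) : ℝ) : ℂ) * z + 1
      = t * P - ((1 - t : ℝ) : ℂ) * Q := by push_cast; ring
  have hcross : (t * P * conj (((1 - t : ℝ) : ℂ) * Q)).re ≤ 0 := by
    rw [map_mul, conj_ofReal, mul_mul_mul_comm, ← ofReal_mul, re_ofReal_mul]
    exact mul_nonpos_of_nonneg_of_nonpos (mul_nonneg ht.1 (sub_nonneg.2 ht.2))
      (re_mul_conj_nonpos_of_norm_le_one hz.le hα₁.2 hα₂.1 hle)
  have hz1 : z + 1 ≠ 0 := fun h => by simp [eq_neg_of_add_eq_zero_left h] at hz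
  have hz2 : z - 1 ≠ 0 := fun h => by simp [sub_eq_zero.1 h] at hz
  have hD0 : (t : ℂ) * P - ((1 - t : ℝ) : ℂ) * Q ≠ 0 := by
    refine sub_ne_zero_of_re_mul_conj_nonpos hcross ?_
    rcases eq_or_lt_of_le ht.1 with rfl | htpos
    · exact Or.inr (mul_ne_zero (ofReal_ne_zero.2 (by norm_num))
        (mul_ne_zero hz2 (sq_sub_two_mul_add_one_ne_zero hz hα₂)))
    · exact Or.inl (mul_ne_zero (ofReal_ne_zero.2 htpos.ne')
        (mul_ne_zero hz1 (sq_sub_two_mul_add_one_ne_zero hz hα₁)))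
  rw [hN, hD, norm_mul]
  calc ‖z‖ * ‖t * P + ((1 - t : ℝ) : ℂ) * Q‖ ≤ ‖z‖ * ‖t * P - ((1 - t : ℝ) : ℂ) * Q‖ :=
        mul_le_mul_of_nonneg_left (norm_add_le_norm_sub_of_re_mul_conj_nonpos hcross)
          (norm_nonneg z)
    _ < ‖t * P - ((1 - t : ℝ) : ℂ) * Q‖ := mul_lt_of_lt_one_left (norm_pos_iff.2 hD0) hz
end

section
/- For θ ∈ (0,π), the function φ(z) = (1-z²)/((1+z·e^{iθ})(1+z·e^{-iθ})) satisfies Re[φ(z)] > 0 for all z in the open unit disk E. -/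
/-!
The denominator is `1 + 2 cos θ · z + z²`, and multiplying numerator and denominator by the
conjugate of the denominator gives
`Re[(1 - z²) · conj (1 + 2cz + z²)] = (1 - |z|²)(1 + |z|² + 2c · Re z)`.
For `|c| ≤ 1` the second factor is at least `(1 - |z|)²`, so both factors are positive on the
open disk.
-/

open ComplexConjugate

namespace Complex

theorem re_div_pos_of_re_mul_conj_pos {w d : ℂ} (h : 0 < (w * conj d).re) : 0 < (w / d).re := by
  have hd : d ≠ 0 := by
    rintro rfl
    simp at h
  have hre : (w / d).re = (w * conj d).re / normSq d := by
    simp only [div_re, mul_re, conj_re, conj_im]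
    ring
  rw [hre]
  exact div_pos h (normSq_pos.mpr hd)

theorem one_add_mul_exp_mul_one_add_mul_exp_neg (z θ : ℂ) :
    (1 + z * exp (I * θ)) * (1 + z * exp (-I * θ)) = 1 + 2 * cos θ * z + z ^ 2 := by
  have hprod : exp (I * θ) * exp (-I * θ) = 1 := by
    rw [← exp_add, ← add_mul, add_neg_cancel, zero_mul, exp_zero]
  rw [cos, show θ * I = I * θ by ring, show -θ * I = -I * θ by ring]
  linear_combination z ^ 2 * hprod

theorem re_one_sub_sq_mul_conj (c : ℝ) (z : ℂ) :
    ((1 - z ^ 2) * conj (1 + 2 * c * z + z ^ 2)).re =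
      (1 - normSq z) * (1 + normSq z + 2 * c * z.re) := by
  simp only [map_add, map_mul, map_one, map_ofNat, conj_ofReal, normSq_apply, mul_re,
    mul_im, sub_re, sub_im, add_re, add_im, one_re, one_im, conj_re, conj_im, pow_two, ofReal_re,
    ofReal_im, re_ofNat, im_ofNat]
  ring

theorem re_one_sub_sq_div_pos {c : ℝ} (hc : |c| ≤ 1) {z : ℂ} (hz : ‖z‖ < 1) :
    0 < ((1 - z ^ 2) / (1 + 2 * c * z + z ^ 2)).re := by
  apply re_div_pos_of_re_mul_conj_pos
  rw [re_one_sub_sq_mul_conj, normSq_eq_norm_sq]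
  have hre : |c * z.re| ≤ ‖z‖ := by
    rw [abs_mul]
    simpa using mul_le_mul hc (abs_re_le_norm z) (abs_nonneg _) zero_le_one
  have hnorm : 0 ≤ ‖z‖ := norm_nonneg z
  apply mul_pos
  · nlinarith
  · nlinarith [neg_abs_le (c * z.re)]

end Complex

theorem stmt_13_general (θ : ℝ) (z : ℂ)
    (hz : ‖z‖ < 1) :
    0 < ((1 - z ^ 2) /
      ((1 + z * Complex.exp (Complex.I * θ)) * (1 + z * Complex.exp (-Complex.I * θ)))).re := by
  rw [Complex.one_add_mul_exp_mul_one_add_mul_exp_neg, ← Complex.ofReal_cos]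
  exact Complex.re_one_sub_sq_div_pos (Real.abs_cos_le_one θ) hz

theorem stmt_13 (θ : ℝ) (hθ : θ ∈ Set.Ioo (0 : ℝ) Real.pi) (z : ℂ)
    (hz : ‖z‖ < 1) :
    0 < ((1 - z ^ 2) /
      ((1 + z * Complex.exp (Complex.I * θ)) * (1 + z * Complex.exp (-Complex.I * θ)))).re :=
  stmt_13_general θ z hz
end
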